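/- If R ~ Rayleigh(1) and V has density 1/(π√(1−v²)) on (−1,1) (the law of sin of a uniform angle), independent of R, then R·V is standard normal. -/

import Mathlib

/-!
Write `V = sin Θ` with `Θ` uniform on `(-π/2, π/2)`. In polar coordinates the Rayleigh factor
`r` is exactly the Jacobian, so `(R cos Θ, R sin Θ)` has density `2 φ(x) φ(y)` on the half-plane
`x > 0`, where `φ` is the standard normal density. Its second coordinate `R V` therefore has
density `φ(y) · 2 ∫_{x > 0} φ = φ(y)`.
-/

open MeasureTheory ProbabilityTheory Real

/-- The Rayleigh distribution with scale 1, with density `r · exp(-r²/2)` on `(0, ∞)`. -/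
noncomputable def rayleighMeasure : Measure ℝ :=
  volume.withDensity fun r =>
    ENNReal.ofReal (if 0 < r then r * Real.exp (-r ^ 2 / 2) else 0)

/-- The arcsine-type distribution with density `1 / (π √(1 - v²))` on `(-1, 1)`. -/
noncomputable def arcsineMeasure : Measure ℝ :=
  volume.withDensity fun v =>
    ENNReal.ofReal (if v ∈ Set.Ioo (-1 : ℝ) 1 then 1 / (π * Real.sqrt (1 - v ^ 2)) else 0)

open Set ENNReal

instance : SFinite rayleighMeasure := by unfold rayleighMeasure; infer_instance
instance : SFinite arcsineMeasure := by unfold arcsineMeasure; infer_instance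

theorem lintegral_withDensity_ofReal_ite {α : Type*} [MeasurableSpace α] (μ : Measure α)
    {s : Set α} [DecidablePred (· ∈ s)] (hs : MeasurableSet s) {f : α → ℝ} (hf : Measurable f)
    (g : α → ℝ≥0∞) :
    ∫⁻ x, g x ∂μ.withDensity (fun x => ENNReal.ofReal (if x ∈ s then f x else 0)) =
      ∫⁻ x in s, ENNReal.ofReal (f x) * g x ∂μ := by
  have hdens : (fun x => ENNReal.ofReal (if x ∈ s then f x else 0)) =
      s.indicator fun x => ENNReal.ofReal (f x) := by
    ext x; by_cases hx : x ∈ s <;> simp [hx]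
  rw [hdens, lintegral_withDensity_eq_lintegral_mul_non_measurable _
    (hf.ennreal_ofReal.indicator hs) (.of_forall fun x => ?_), ← lintegral_indicator hs]
  · congr with x
    by_cases hx : x ∈ s <;> simp [hx]
  · by_cases hx : x ∈ s <;> simp [hx]

theorem lintegral_rayleighMeasure (g : ℝ → ℝ≥0∞) :
    ∫⁻ r, g r ∂rayleighMeasure = ∫⁻ r in Ioi 0, ENNReal.ofReal (r * exp (-r ^ 2 / 2)) * g r :=
  lintegral_withDensity_ofReal_ite (s := Ioi 0) volume measurableSet_Ioi (by fun_prop) g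

theorem sin_image_Ioo : sin '' Ioo (-(π / 2)) (π / 2) = Ioo (-1) 1 :=
  sinPartialHomeomorph.image_source_eq_target

theorem lintegral_arcsineMeasure (g : ℝ → ℝ≥0∞) :
    ∫⁻ v, g v ∂arcsineMeasure =
      ENNReal.ofReal π⁻¹ * ∫⁻ θ in Ioo (-(π / 2)) (π / 2), g (sin θ) := by
  rw [arcsineMeasure, lintegral_withDensity_ofReal_ite volume measurableSet_Ioo (by fun_prop) g,
    ← sin_image_Ioo, lintegral_image_eq_lintegral_abs_deriv_mul measurableSet_Ioo
      (fun θ _ => (hasDerivAt_sin θ).hasDerivWithinAt) (injOn_sin.mono Ioo_subset_Icc_self),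
    ← lintegral_const_mul' _ _ ofReal_ne_top]
  refine setLIntegral_congr_fun measurableSet_Ioo fun θ hθ => ?_
  have hcos : 0 < cos θ := cos_pos_of_mem_Ioo hθ
  rw [← cos_sq', sqrt_sq hcos.le, abs_of_pos hcos, ← mul_assoc, ← ofReal_mul hcos.le]
  congr 2
  field_simp

theorem cos_pos_iff_of_mem_Ioo {θ : ℝ} (hθ : θ ∈ Ioo (-π) π) :
    0 < cos θ ↔ θ ∈ Ioo (-(π / 2)) (π / 2) := by
  refine ⟨fun hcos => ⟨?_, ?_⟩, cos_pos_of_mem_Ioo⟩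
  · by_contra! h
    have := cos_nonpos_of_pi_div_two_le_of_le (x := -θ) (by linarith) (by linarith [hθ.1])
    rw [cos_neg] at this
    linarith
  · by_contra! h
    have := cos_nonpos_of_pi_div_two_le_of_le h (by linarith [hθ.2, pi_pos])
    linarith

theorem polarCoord_target_inter_preimage_Ioi_prod_univ :
    polarCoord.target ∩ polarCoord.symm ⁻¹' (Ioi 0 ×ˢ univ) =
      Ioi 0 ×ˢ Ioo (-(π / 2)) (π / 2) := by
  ext ⟨r, θ⟩
  simp only [polarCoord_target, polarCoord_symm_apply, mem_inter_iff, mem_prod, mem_Ioi,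
    mem_preimage, mem_univ, and_true]
  constructor
  · rintro ⟨⟨hr, hθ⟩, hpos⟩
    exact ⟨hr, (cos_pos_iff_of_mem_Ioo hθ).1 (pos_of_mul_pos_right hpos hr.le)⟩
  · rintro ⟨hr, hθ⟩
    exact ⟨⟨hr, by constructor <;> linarith [hθ.1, hθ.2, pi_pos]⟩,
      mul_pos hr (cos_pos_of_mem_Ioo hθ)⟩

theorem setLIntegral_comp_polarCoord_symm_halfPlane (f : ℝ × ℝ → ℝ≥0∞) :
    ∫⁻ p in Ioi 0 ×ˢ Ioo (-(π / 2)) (π / 2), ENNReal.ofReal p.1 * f (polarCoord.symm p) =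
      ∫⁻ q in Ioi 0 ×ˢ univ, f q := by
  have hmeas : MeasurableSet (Ioi (0 : ℝ) ×ˢ (univ : Set ℝ)) := measurableSet_Ioi.prod .univ
  symm
  rw [← lintegral_indicator hmeas, ← lintegral_comp_polarCoord_symm,
    ← polarCoord_target_inter_preimage_Ioi_prod_univ, inter_comm,
    ← setLIntegral_indicator (hmeas.preimage continuous_polarCoord_symm.measurable)]
  congr with p
  simp [indicator]

theorem setLIntegral_rayleigh_mul_comp_sin (g : ℝ → ℝ≥0∞) :
    ∫⁻ p in Ioi 0 ×ˢ Ioo (-(π / 2)) (π / 2),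
        ENNReal.ofReal (p.1 * exp (-p.1 ^ 2 / 2)) * g (p.1 * sin p.2) =
      ∫⁻ q in Ioi 0 ×ˢ univ,
        ENNReal.ofReal (exp (-q.1 ^ 2 / 2)) * (ENNReal.ofReal (exp (-q.2 ^ 2 / 2)) * g q.2) := by
  rw [← setLIntegral_comp_polarCoord_symm_halfPlane]
  refine setLIntegral_congr_fun (measurableSet_Ioi.prod measurableSet_Ioo) fun p hp => ?_
  have hexp : exp (-p.1 ^ 2 / 2) =
      exp (-(p.1 * cos p.2) ^ 2 / 2) * exp (-(p.1 * sin p.2) ^ 2 / 2) := by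
    rw [← exp_add]
    congr 1
    linear_combination (p.1 ^ 2 / 2) * cos_sq_add_sin_sq p.2
  rw [polarCoord_symm_apply, ← mul_assoc, ← mul_assoc, ← ofReal_mul hp.1.le,
    ← ofReal_mul (mul_nonneg hp.1.le (exp_pos _).le), hexp, mul_assoc]

theorem setLIntegral_Ioi_exp_neg_sq_div_two :
    ∫⁻ x in Ioi 0, ENNReal.ofReal (exp (-x ^ 2 / 2)) = ENNReal.ofReal (√(2 * π) / 2) := by
  have hform (x : ℝ) : -x ^ 2 / 2 = -(1 / 2) * x ^ 2 := by ring
  simp_rw [hform]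
  rw [← ofReal_integral_eq_lintegral_ofReal
    (integrable_exp_neg_mul_sq (by norm_num)).integrableOn (.of_forall fun _ => (exp_pos _).le),
    integral_gaussian_Ioi, div_div_eq_mul_div, div_one, mul_comm]

theorem gaussianPDF_zero_one (y : ℝ) :
    gaussianPDF 0 1 y = ENNReal.ofReal ((√(2 * π))⁻¹ * exp (-y ^ 2 / 2)) := by
  simp [gaussianPDF, gaussianPDFReal]

theorem lintegral_gaussianReal_zero_one_eq_halfPlane {g : ℝ → ℝ≥0∞} (hg : Measurable g) :
    ∫⁻ y, g y ∂gaussianReal 0 1 =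
      ENNReal.ofReal π⁻¹ * ∫⁻ q in Ioi 0 ×ˢ univ,
        ENNReal.ofReal (exp (-q.1 ^ 2 / 2)) * (ENNReal.ofReal (exp (-q.2 ^ 2 / 2)) * g q.2) := by
  have hconst : π⁻¹ * (√(2 * π) / 2) = (√(2 * π))⁻¹ := by
    field_simp
    rw [sq_sqrt (by positivity)]
  rw [Measure.volume_eq_prod, ← Measure.prod_restrict, Measure.restrict_univ,
    lintegral_prod_mul (f := fun x => ENNReal.ofReal (exp (-x ^ 2 / 2)))
      (g := fun y => ENNReal.ofReal (exp (-y ^ 2 / 2)) * g y) (by fun_prop) (by fun_prop),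
    setLIntegral_Ioi_exp_neg_sq_div_two, ← mul_assoc, ← ofReal_mul (by positivity), hconst,
    ← lintegral_const_mul' _ _ ofReal_ne_top, gaussianReal_of_var_ne_zero _ one_ne_zero,
    lintegral_withDensity_eq_lintegral_mul _ (measurable_gaussianPDF 0 1) hg]
  refine lintegral_congr fun y => ?_
  rw [Pi.mul_apply, gaussianPDF_zero_one, ofReal_mul (by positivity), mul_assoc]

theorem map_mul_rayleighMeasure_prod_arcsineMeasure :
    (rayleighMeasure.prod arcsineMeasure).map (fun p => p.1 * p.2) = gaussianReal 0 1 := by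
  refine Measure.ext_of_lintegral _ fun g hg => ?_
  calc ∫⁻ z, g z ∂(rayleighMeasure.prod arcsineMeasure).map (fun p => p.1 * p.2)
      = ∫⁻ r, ∫⁻ v, g (r * v) ∂arcsineMeasure ∂rayleighMeasure := by
        rw [lintegral_map hg (by fun_prop), lintegral_prod _ (by fun_prop)]
    _ = ENNReal.ofReal π⁻¹ * ∫⁻ r in Ioi 0, ∫⁻ θ in Ioo (-(π / 2)) (π / 2),
          ENNReal.ofReal (r * exp (-r ^ 2 / 2)) * g (r * sin θ) := by
        simp_rw [lintegral_rayleighMeasure, lintegral_arcsineMeasure]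
        rw [← lintegral_const_mul' _ _ ofReal_ne_top]
        refine lintegral_congr fun r => ?_
        rw [lintegral_const_mul' _ _ ofReal_ne_top, mul_left_comm]
    _ = ENNReal.ofReal π⁻¹ * ∫⁻ p in Ioi 0 ×ˢ Ioo (-(π / 2)) (π / 2),
          ENNReal.ofReal (p.1 * exp (-p.1 ^ 2 / 2)) * g (p.1 * sin p.2) := by
        rw [Measure.volume_eq_prod, ← Measure.prod_restrict, lintegral_prod _ (by fun_prop)]
    _ = ∫⁻ y, g y ∂gaussianReal 0 1 := by
        rw [setLIntegral_rayleigh_mul_comp_sin, lintegral_gaussianReal_zero_one_eq_halfPlane hg]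

theorem stmt17 {Ω : Type*} [MeasurableSpace Ω] (P : Measure Ω) [IsProbabilityMeasure P]
    (R V : Ω → ℝ) (hR : Measurable R) (hV : Measurable V)
    (hind : IndepFun R V P)
    (hRlaw : Measure.map R P = rayleighMeasure)
    (hVlaw : Measure.map V P = arcsineMeasure) :
    Measure.map (fun ω => R ω * V ω) P = gaussianReal 0 1 := by
  have hpair : P.map (fun ω => (R ω, V ω)) = rayleighMeasure.prod arcsineMeasure := by
    rw [← hRlaw, ← hVlaw]
    exact hind.map_prod_eq_prod_map_map hR.aemeasurable hV.aemeasurable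
  rw [← map_mul_rayleighMeasure_prod_arcsineMeasure, ← hpair,
    Measure.map_map (by fun_prop) (hR.prodMk hV)]
  rfl
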